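/- Let q be a prime power, F = GF(q), R the ring of ternions over F, and n ≥ 1. The number of orbits of the action of GL_{n+1}(R) on R^{n+1} (by right multiplication of row vectors by invertible matrices over R) is exactly 5 + q. -/

import Mathlib

set_option synthInstance.maxHeartbeats 1000000
set_option maxHeartbeats 1000000

/-- The ring of ternions over a field `F`: the subring of `2×2` matrices over `F`
consisting of all upper triangular matrices. -/
def ternions (F : Type) [Field F] : Subring (Matrix (Fin 2) (Fin 2) F) where
  carrier := {A | A 1 0 = 0}
  zero_mem' := by simp
  one_mem' := by simp [Matrix.one_apply]
  add_mem' := by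
    intro a b ha hb
    simp only [Set.mem_setOf_eq, Matrix.add_apply] at *
    simp [ha, hb]
  neg_mem' := by
    intro a ha
    simp only [Set.mem_setOf_eq, Matrix.neg_apply] at *
    simp [ha]
  mul_mem' := by
    intro a b ha hb
    simp only [Set.mem_setOf_eq, Matrix.mul_apply, Fin.sum_univ_two] at *
    simp [ha, hb]

/-!
A ternion is `!![p, r; 0, s]`, so a vector of ternions is a triple `(a, b, c)` of vectors over `F`
(its `(0,0)`, `(0,1)` and `(1,1)` entries), and a matrix of ternions with parts `P, R, S` acts by
`(a, b, c) ↦ (a P, a R + b S, c S)`; it is invertible iff `P` and `S` are. If `a ≠ 0`, the term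
`a R` absorbs `b`, and only whether `c = 0` survives: two orbits. If `a = 0`, `S` acts on the pair
`(b, c)`, whose orbits are `(0, 0)`, `(0, c ≠ 0)`, `(b, μ b)` for `b ≠ 0` and `μ ∈ F`, and the
linearly independent pairs (which exist as `n ≥ 1`): `q + 3` orbits. This gives `q + 5` in all.
-/

def Quot.equivOfNormalForm {α β : Type*} {r : α → α → Prop} (f : α → β)
    (hf : ∀ x y, r x y → f x = f y) (s : β → α) (hfs : ∀ b, f (s b) = b)
    (hsf : ∀ x, r x (s (f x))) : Quot r ≃ β where
  toFun := Quot.lift f hf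
  invFun b := Quot.mk r (s b)
  left_inv := Quot.ind fun x => (Quot.sound (hsf x)).symm
  right_inv := hfs

section LinearAlgebra

open Matrix Submodule

variable {K V : Type*} [Field K] [AddCommGroup V] [Module K V]

theorem exists_linearEquiv_apply_eq_of_linearIndependent [FiniteDimensional K V] {ι : Type*}
    {v w : ι → V} (hv : LinearIndependent K v) (hw : LinearIndependent K w) :
    ∃ g : V ≃ₗ[K] V, ∀ i, g (v i) = w i := by
  obtain ⟨g, hg⟩ :=
    exists_linearEquiv_restrict_eq (hv.linearCombinationEquiv.symm ≪≫ₗ hw.linearCombinationEquiv)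
  refine ⟨g, fun i => ?_⟩
  have hvi : v i ∈ span K (Set.range v) := subset_span (Set.mem_range_self i)
  have hsingle : hv.linearCombinationEquiv (Finsupp.single i 1) = ⟨v i, hvi⟩ := by ext; simp
  rw [← hg ⟨v i, hvi⟩, LinearEquiv.trans_apply, ← hsingle, LinearEquiv.symm_apply_apply]
  simp

theorem linearIndependent_pair_single {m : Type*} [DecidableEq m] {i j : m} (hij : i ≠ j) :
    LinearIndependent K ![(Pi.single i 1 : m → K), Pi.single j 1] := by
  rw [LinearIndependent.pair_iff' (by simp)]
  intro μ h
  simpa [hij] using congrFun h j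

variable {m : Type*} [Fintype m] [DecidableEq m]

theorem Matrix.exists_isUnit_vecMul_eq_of_linearIndependent {ι : Type*} {v w : ι → m → K}
    (hv : LinearIndependent K v) (hw : LinearIndependent K w) :
    ∃ S : Matrix m m K, IsUnit S ∧ ∀ i, v i ᵥ* S = w i := by
  obtain ⟨g, hg⟩ := exists_linearEquiv_apply_eq_of_linearIndependent hv hw
  refine ⟨(LinearMap.toMatrix' g.toLinearMap)ᵀ, ?_, fun i => ?_⟩
  · rw [isUnit_transpose, LinearMap.isUnit_toMatrix'_iff]
    exact (Module.End.isUnit_iff _).mpr g.bijective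
  · rw [vecMul_transpose, LinearMap.toMatrix'_mulVec]
    exact hg i

theorem Matrix.exists_isUnit_vecMul_eq {v w : m → K} (hv : v ≠ 0) (hw : w ≠ 0) :
    ∃ S : Matrix m m K, IsUnit S ∧ v ᵥ* S = w := by
  obtain ⟨S, hS, h⟩ := exists_isUnit_vecMul_eq_of_linearIndependent (ι := Unit)
    (v := fun _ => v) (w := fun _ => w) (linearIndependent_unique_iff.mpr hv)
    (linearIndependent_unique_iff.mpr hw)
  exact ⟨S, hS, h ()⟩

theorem Matrix.exists_vecMul_eq {v : m → K} (hv : v ≠ 0) (w : m → K) :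
    ∃ R : Matrix m m K, v ᵥ* R = w := by
  obtain ⟨i, hi⟩ := Function.ne_iff.mp hv
  refine ⟨vecMulVec (Pi.single i (v i)⁻¹) w, ?_⟩
  simp [vecMul_vecMulVec, dotProduct_single, mul_inv_cancel₀ hi]

end LinearAlgebra

section OrbitType

open Matrix

variable (K : Type*) {V W : Type*} [Field K] [AddCommGroup V] [Module K V] [AddCommGroup W]
  [Module K W]

-- Only meaningful for `b ≠ 0`: for `b = c = 0` it is `some` of an arbitrary scalar.
open Classical in
noncomputable def proportionalityFactor (b c : V) : Option K :=
  if ∃ μ : K, μ • b = c then some (Classical.epsilon fun μ : K => μ • b = c) else none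

open Classical in
noncomputable def pairType (b c : V) : Bool ⊕ Option K :=
  if b = 0 then .inl (decide (c = 0)) else .inr (proportionalityFactor K b c)

open Classical in
noncomputable def tripleType (a b c : V) : Bool ⊕ Bool ⊕ Option K :=
  if a = 0 then .inr (pairType K b c) else .inl (decide (c = 0))

variable {K} {g : V →ₗ[K] W}

lemma proportionalityFactor_smul {b : V} (hb : b ≠ 0) (μ : K) :
    proportionalityFactor K b (μ • b) = some μ := by
  have h : ∃ ν : K, ν • b = μ • b := ⟨μ, rfl⟩
  rw [proportionalityFactor, if_pos h]
  exact congrArg some (smul_left_injective K hb (Classical.epsilon_spec h))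

lemma proportionalityFactor_of_linearIndependent {b c : V} (h : LinearIndependent K ![b, c]) :
    proportionalityFactor K b c = none := by
  have hb : b ≠ 0 := by simpa using h.ne_zero 0
  rw [proportionalityFactor, if_neg (not_exists.mpr ((LinearIndependent.pair_iff' hb).mp h))]

lemma proportionalityFactor_map (hg : Function.Injective g) (b c : V) :
    proportionalityFactor K (g b) (g c) = proportionalityFactor K b c := by
  classical
  have hcoeff (μ : K) : μ • g b = g c ↔ μ • b = c := by rw [← map_smul, hg.eq_iff]
  simp only [proportionalityFactor, hcoeff]

lemma pairType_map (hg : Function.Injective g) (b c : V) :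
    pairType K (g b) (g c) = pairType K b c := by
  classical
  simp [pairType, hg.eq_iff' (map_zero g), proportionalityFactor_map hg]

lemma tripleType_map {P S : V →ₗ[K] W} (hP : Function.Injective P) (hS : Function.Injective S)
    (R : V →ₗ[K] W) (a b c : V) :
    tripleType K (P a) (R a + S b) (S c) = tripleType K a b c := by
  classical
  by_cases ha : a = 0
  · simp [tripleType, ha, pairType_map hS]
  · simp [tripleType, ha, hP.eq_iff' (map_zero P), hS.eq_iff' (map_zero S)]

lemma tripleType_vecMul {m : Type*} [Fintype m] [DecidableEq m] {P S : Matrix m m K}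
    (hP : IsUnit P) (hS : IsUnit S) (R : Matrix m m K) (a b c : m → K) :
    tripleType K (a ᵥ* P) (a ᵥ* R + b ᵥ* S) (c ᵥ* S) = tripleType K a b c :=
  tripleType_map (P := P.vecMulLinear) (S := S.vecMulLinear) (vecMul_injective_of_isUnit hP)
    (vecMul_injective_of_isUnit hS) R.vecMulLinear a b c

end OrbitType

namespace ternions

open Matrix

variable {F : Type} [Field F] {m : Type} {n : ℕ}

def mk (p r s : F) : ternions F := ⟨!![p, r; 0, s], rfl⟩

def diagFst : ternions F →+* F where
  toFun x := x.1 0 0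
  map_one' := rfl
  map_mul' x y := by
    have hy : y.1 1 0 = 0 := y.2
    simp [Matrix.mul_apply, hy]
  map_zero' := rfl
  map_add' _ _ := rfl

def diagSnd : ternions F →+* F where
  toFun x := x.1 1 1
  map_one' := rfl
  map_mul' x y := by
    have hx : x.1 1 0 = 0 := x.2
    simp [Matrix.mul_apply, hx]
  map_zero' := rfl
  map_add' _ _ := rfl

def corner : ternions F →+ F where
  toFun x := x.1 0 1
  map_zero' := rfl
  map_add' _ _ := rfl

@[simp] lemma diagFst_mk (p r s : F) : diagFst (mk p r s) = p := rfl
@[simp] lemma corner_mk (p r s : F) : corner (mk p r s) = r := rfl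
@[simp] lemma diagSnd_mk (p r s : F) : diagSnd (mk p r s) = s := rfl

@[simp] lemma corner_one : corner (1 : ternions F) = 0 := rfl

lemma corner_mul (x y : ternions F) :
    corner (x * y) = diagFst x * corner y + corner x * diagSnd y := by
  show (x.1 * y.1) 0 1 = x.1 0 0 * y.1 0 1 + x.1 0 1 * y.1 1 1
  simp [Matrix.mul_apply]

@[ext]
lemma ext {x y : ternions F} (h₀ : diagFst x = diagFst y) (h : corner x = corner y)
    (h₁ : diagSnd x = diagSnd y) : x = y := by
  have hx : x.1 1 0 = 0 := x.2
  have hy : y.1 1 0 = 0 := y.2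
  ext i j
  fin_cases i <;> fin_cases j
  exacts [h₀, h, hx.trans hy.symm, h₁]

def mkVec (a b c : m → F) : m → ternions F := fun i => mk (a i) (b i) (c i)

def mkMatrix (P R S : Matrix m m F) : Matrix m m (ternions F) :=
  of fun i j => mk (P i j) (R i j) (S i j)

@[simp] lemma diagFst_comp_mkVec (a b c : m → F) : diagFst ∘ mkVec a b c = a := rfl
@[simp] lemma corner_comp_mkVec (a b c : m → F) : corner ∘ mkVec a b c = b := rfl
@[simp] lemma diagSnd_comp_mkVec (a b c : m → F) : diagSnd ∘ mkVec a b c = c := rfl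

@[simp] lemma map_diagFst_mkMatrix (P R S : Matrix m m F) : (mkMatrix P R S).map diagFst = P :=
  rfl
@[simp] lemma map_corner_mkMatrix (P R S : Matrix m m F) : (mkMatrix P R S).map corner = R :=
  rfl
@[simp] lemma map_diagSnd_mkMatrix (P R S : Matrix m m F) : (mkMatrix P R S).map diagSnd = S :=
  rfl

noncomputable def orbitType (X : m → ternions F) : Bool ⊕ Bool ⊕ Option F :=
  tripleType F (diagFst ∘ X) (corner ∘ X) (diagSnd ∘ X)

lemma mkVec_coords (X : m → ternions F) : mkVec (diagFst ∘ X) (corner ∘ X) (diagSnd ∘ X) = X :=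
  funext fun _ => ext rfl rfl rfl

lemma mkMatrix_one [DecidableEq m] : mkMatrix (1 : Matrix m m F) 0 1 = 1 := by
  ext i j : 1
  by_cases h : i = j <;> ext <;> simp [mkMatrix, h, one_apply]

variable [Fintype m]

lemma comp_vecMul (f : ternions F →+* F) (X : m → ternions F) (A : Matrix m m (ternions F)) :
    f ∘ (X ᵥ* A) = (f ∘ X) ᵥ* A.map f :=
  funext (f.map_vecMul A X)

lemma corner_comp_vecMul (X : m → ternions F) (A : Matrix m m (ternions F)) :
    corner ∘ (X ᵥ* A) = (diagFst ∘ X) ᵥ* A.map corner + (corner ∘ X) ᵥ* A.map diagSnd := by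
  funext j
  simp [vecMul, dotProduct, map_sum, corner_mul, Finset.sum_add_distrib]

lemma mkVec_vecMul_mkMatrix (a b c : m → F) (P R S : Matrix m m F) :
    mkVec a b c ᵥ* mkMatrix P R S = mkVec (a ᵥ* P) (a ᵥ* R + b ᵥ* S) (c ᵥ* S) := by
  rw [← mkVec_coords (mkVec a b c ᵥ* mkMatrix P R S), comp_vecMul, comp_vecMul,
    corner_comp_vecMul]
  simp

lemma mkMatrix_mul_mkMatrix (P R S P' R' S' : Matrix m m F) :
    mkMatrix P R S * mkMatrix P' R' S' = mkMatrix (P * P') (P * R' + R * S') (S * S') := by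
  funext i
  -- row `i` of `mkMatrix P R S` is definitionally `mkVec (P i) (R i) (S i)`
  exact mkVec_vecMul_mkMatrix (P i) (R i) (S i) P' R' S'

lemma isUnit_mkMatrix [DecidableEq m] {P S : Matrix m m F} (hP : IsUnit P) (hS : IsUnit S)
    (R : Matrix m m F) : IsUnit (mkMatrix P R S) := by
  obtain ⟨P, rfl⟩ := hP
  obtain ⟨S, rfl⟩ := hS
  refine ⟨⟨mkMatrix P R S, mkMatrix P.inv (-(P.inv * R * S.inv)) S.inv, ?_, ?_⟩, rfl⟩ <;>
    simp [mkMatrix_mul_mkMatrix, ← mkMatrix_one, Matrix.mul_assoc]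

lemma orbitType_vecMul [DecidableEq m] (X : m → ternions F) {A : Matrix m m (ternions F)}
    (hA : IsUnit A) : orbitType (X ᵥ* A) = orbitType X := by
  simp only [orbitType, comp_vecMul, corner_comp_vecMul]
  exact tripleType_vecMul (hA.map diagFst.mapMatrix) (hA.map diagSnd.mapMatrix) _ _ _ _

def orbitRep (n : ℕ) : Bool ⊕ Bool ⊕ Option F → Fin (n + 1) → ternions F
  | .inl z => mkVec (Pi.single 0 1) 0 (if z then 0 else Pi.single 0 1)
  | .inr (.inl z) => mkVec 0 0 (if z then 0 else Pi.single 0 1)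
  | .inr (.inr (some μ)) => mkVec 0 (Pi.single 0 1) (μ • Pi.single 0 1)
  | .inr (.inr none) => mkVec 0 (Pi.single 0 1) (Pi.single 1 1)

lemma linearIndependent_single_zero_one (hn : 1 ≤ n) :
    LinearIndependent F ![(Pi.single 0 1 : Fin (n + 1) → F), Pi.single 1 1] :=
  linearIndependent_pair_single (by simp [Fin.ext_iff, Nat.mod_eq_of_lt (by omega : 1 < n + 1)])

lemma exists_pair_normalForm (hn : 1 ≤ n) (b c : Fin (n + 1) → F) :
    ∃ S : Matrix (Fin (n + 1)) (Fin (n + 1)) F, IsUnit S ∧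
      mkVec 0 (b ᵥ* S) (c ᵥ* S) = orbitRep n (.inr (pairType F b c)) := by
  have he : (Pi.single 0 1 : Fin (n + 1) → F) ≠ 0 := by simp
  by_cases hb : b = 0
  · subst hb
    by_cases hc : c = 0
    · exact ⟨1, isUnit_one, by simp [pairType, orbitRep, hc]⟩
    · obtain ⟨S, hS, hcS⟩ := exists_isUnit_vecMul_eq hc he
      exact ⟨S, hS, by simp [pairType, orbitRep, hc, hcS]⟩
  obtain ⟨S, hS, hbS⟩ := exists_isUnit_vecMul_eq hb he
  by_cases hc : ∃ μ : F, μ • b = c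
  · obtain ⟨μ, rfl⟩ := hc
    refine ⟨S, hS, ?_⟩
    simp [pairType, orbitRep, hb, proportionalityFactor_smul hb, smul_vecMul, hbS]
  · have hind : LinearIndependent F ![b, c] :=
      (LinearIndependent.pair_iff' hb).mpr (not_exists.mp hc)
    obtain ⟨S, hS, hS'⟩ :=
      exists_isUnit_vecMul_eq_of_linearIndependent hind (linearIndependent_single_zero_one hn)
    have hbS : b ᵥ* S = Pi.single 0 1 := hS' 0
    have hcS : c ᵥ* S = Pi.single 1 1 := hS' 1
    refine ⟨S, hS, ?_⟩
    simp [pairType, orbitRep, hb, proportionalityFactor_of_linearIndependent hind, hbS, hcS]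

lemma exists_normalForm (hn : 1 ≤ n) (a b c : Fin (n + 1) → F) :
    ∃ P R S : Matrix (Fin (n + 1)) (Fin (n + 1)) F, IsUnit P ∧ IsUnit S ∧
      mkVec (a ᵥ* P) (a ᵥ* R + b ᵥ* S) (c ᵥ* S) = orbitRep n (tripleType F a b c) := by
  classical
  by_cases ha : a = 0
  · obtain ⟨S, hS, h⟩ := exists_pair_normalForm hn b c
    exact ⟨1, 0, S, isUnit_one, hS, by simpa [tripleType, ha] using h⟩
  have he : (Pi.single 0 1 : Fin (n + 1) → F) ≠ 0 := by simp
  obtain ⟨P, hP, haP⟩ := exists_isUnit_vecMul_eq ha he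
  obtain ⟨S, hS, hcS⟩ : ∃ S : Matrix (Fin (n + 1)) (Fin (n + 1)) F, IsUnit S ∧
      c ᵥ* S = if c = 0 then 0 else Pi.single 0 1 := by
    by_cases hc : c = 0
    · exact ⟨1, isUnit_one, by simp [hc]⟩
    · simpa [hc] using exists_isUnit_vecMul_eq hc he
  obtain ⟨R, hR⟩ := exists_vecMul_eq ha (-(b ᵥ* S))
  exact ⟨P, R, S, hP, hS, by simp [tripleType, orbitRep, ha, haP, hR, hcS]⟩

lemma orbitType_orbitRep (hn : 1 ≤ n) (t : Bool ⊕ Bool ⊕ Option F) :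
    orbitType (orbitRep n t) = t := by
  rcases t with z | z | _ | μ
  · cases z <;> simp [orbitType, orbitRep, tripleType]
  · cases z <;> simp [orbitType, orbitRep, tripleType, pairType]
  · have hnone :=
      proportionalityFactor_of_linearIndependent (linearIndependent_single_zero_one (F := F) hn)
    simp [orbitType, orbitRep, tripleType, pairType, hnone]
  · have he : (Pi.single 0 1 : Fin (n + 1) → F) ≠ 0 := by simp
    simp [orbitType, orbitRep, tripleType, pairType, proportionalityFactor_smul he]

lemma exists_vecMul_eq_orbitRep (hn : 1 ≤ n) (X : Fin (n + 1) → ternions F) :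
    ∃ A : (Matrix (Fin (n + 1)) (Fin (n + 1)) (ternions F))ˣ,
      X ᵥ* A = orbitRep n (orbitType X) := by
  obtain ⟨P, R, S, hP, hS, h⟩ := exists_normalForm hn (diagFst ∘ X) (corner ∘ X) (diagSnd ∘ X)
  obtain ⟨A, hA⟩ := isUnit_mkMatrix hP hS R
  refine ⟨A, ?_⟩
  rw [hA, orbitType, ← h, ← mkVec_vecMul_mkMatrix, mkVec_coords]

end ternions

/-- Over `F = GF(q)`, the action of `GL_{n+1}(R)` on `R^{n+1}` (by right multiplication
of row vectors) has exactly `5 + q` orbits. -/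
theorem ternion_vector_orbit_count (F : Type) [Field F] [Fintype F] (q n : ℕ)
    (hq : Fintype.card F = q) (hn : 1 ≤ n) :
    Nat.card (Quot (fun X Y : Fin (n + 1) → ternions F =>
      ∃ A : (Matrix (Fin (n + 1)) (Fin (n + 1)) (ternions F))ˣ,
        Matrix.vecMul X A.val = Y)) = 5 + q := by
  rw [Nat.card_congr (Quot.equivOfNormalForm ternions.orbitType ?_ (ternions.orbitRep n)
      (ternions.orbitType_orbitRep hn) (ternions.exists_vecMul_eq_orbitRep hn)),
    Nat.card_eq_fintype_card]
  · simp only [Fintype.card_sum, Fintype.card_bool, Fintype.card_option, hq]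
    ring
  · rintro X _ ⟨A, rfl⟩
    exact (ternions.orbitType_vecMul X A.isUnit).symm
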